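/- arXiv:2202.10909 — 2 statements merged into one kernel-verified Lean document; each statement's English description precedes it below -/
import Mathlib

section
/- For every prime p, the p-adic integral of 1/max(1,|b|_p)² over b ∈ ℚ_p equals 1 + 1/p. -/
/-!
Split `ℚ_[p]` into the unit ball `ℤ_[p]` and the spheres `‖b‖ = p ^ (n + 1)`, on which the
integrand is constant, equal to `p ^ (-2 (n + 1))`. The closed ball of radius `p ^ (n + 1)` is a
disjoint union of the `p` balls of radius `p ^ n` centred at `j / p ^ (n + 1)`, `0 ≤ j < p`
(their centres are `p ^ (n + 1)` apart and the norm is ultrametric), so by translation invariance it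
has measure `p ^ (n + 1)`, and the sphere has measure `p ^ (n + 1) (1 - 1/p)`. Hence the integral is
`1 + ∑ₙ p ^ (-(n + 1)) (1 - 1/p) = 1 + 1/p`.
-/

open MeasureTheory Metric Set ENNReal

theorem lintegral_eq_setLIntegral_add_tsum_sdiff {α : Type*} [MeasurableSpace α] {μ : Measure α}
    {B : ℕ → Set α} (hB : Monotone B) (hmeas : ∀ n, MeasurableSet (B n))
    (hcover : ⋃ n, B n = univ) (f : α → ℝ≥0∞) :
    ∫⁻ x, f x ∂μ = ∫⁻ x in B 0, f x ∂μ + ∑' n, ∫⁻ x in B (n + 1) \ B n, f x ∂μ := by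
  rw [← setLIntegral_univ, ← hcover, ← iUnion_disjointed,
    lintegral_iUnion (MeasurableSet.disjointed hmeas) (disjoint_disjointed B),
    tsum_eq_zero_add' ENNReal.summable, disjointed_zero]
  congr! with n
  exact hB.disjointed_succ (not_isMax n)

namespace Padic

variable {p : ℕ} [Fact p.Prime]

lemma exists_natCast_norm_sub_le_inv {y : ℚ_[p]} (hy : ‖y‖ ≤ 1) :
    ∃ j < p, ‖y - j‖ ≤ (p : ℝ)⁻¹ := by
  let z : ℤ_[p] := ⟨y, hy⟩
  obtain ⟨j, hj, hmem⟩ := PadicInt.exists_mem_range z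
  refine ⟨j, hj, ?_⟩
  rw [IsLocalRing.mem_maximalIdeal, PadicInt.mem_nonunits, PadicInt.norm_def,
    PadicInt.coe_sub, PadicInt.coe_natCast] at hmem
  simpa using (norm_le_pow_iff_norm_lt_pow_add_one _ (-1)).2 (by simpa using hmem)

lemma inv_lt_norm_natCast_sub_natCast {j k : ℕ} (hj : j < p) (hk : k < p) (hjk : j ≠ k) :
    (p : ℝ)⁻¹ < ‖(j - k : ℚ_[p])‖ := by
  have hndvd : ¬ (p : ℤ) ∣ j - k := fun hdvd => hjk <| by
    have := Int.eq_zero_of_abs_lt_dvd hdvd (by rw [abs_sub_lt_iff]; omega)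
    omega
  rw [← norm_intCast_lt_one_iff, not_lt] at hndvd
  push_cast at hndvd
  exact (inv_lt_one_of_one_lt₀ (mod_cast (Fact.out : p.Prime).one_lt)).trans_le hndvd

lemma norm_div_p_pow (x : ℚ_[p]) (m : ℕ) : ‖x / (p : ℚ_[p]) ^ m‖ = ‖x‖ * (p : ℝ) ^ m := by
  rw [norm_div, norm_pow, norm_p, inv_pow, div_inv_eq_mul]

lemma closedBall_zero_pow_succ_eq_biUnion (n : ℕ) :
    closedBall (0 : ℚ_[p]) ((p : ℝ) ^ (n + 1)) =
      ⋃ j ∈ Finset.range p, closedBall ((j : ℚ_[p]) / p ^ (n + 1)) ((p : ℝ) ^ n) := by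
  have hp : (p : ℝ) ≠ 0 := Nat.cast_ne_zero.2 (Fact.out : p.Prime).ne_zero
  have hpow : (p : ℚ_[p]) ^ (n + 1) ≠ 0 :=
    pow_ne_zero _ (Nat.cast_ne_zero.2 (Fact.out : p.Prime).ne_zero)
  refine Subset.antisymm (fun x hx => ?_) (iUnion₂_subset fun j _ => ?_)
  · have hy : ‖x * (p : ℚ_[p]) ^ (n + 1)‖ ≤ 1 := by
      rw [norm_mul, norm_pow, norm_p, inv_pow]
      exact mul_inv_le_one_of_le₀ (mem_closedBall_zero_iff.1 hx) (by positivity)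
    obtain ⟨j, hj, hyj⟩ := exists_natCast_norm_sub_le_inv hy
    refine mem_biUnion (Finset.mem_coe.2 (Finset.mem_range.2 hj)) ?_
    rw [mem_closedBall, dist_eq_norm, ← mul_div_cancel_right₀ x hpow, ← sub_div, norm_div_p_pow]
    calc _ ≤ (p : ℝ)⁻¹ * p ^ (n + 1) := by gcongr
      _ = (p : ℝ) ^ n := by rw [pow_succ', inv_mul_cancel_left₀ hp]
  · have hc : (j : ℚ_[p]) / p ^ (n + 1) ∈ closedBall 0 ((p : ℝ) ^ (n + 1)) := by
      rw [mem_closedBall_zero_iff, norm_div_p_pow]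
      exact mul_le_of_le_one_left (by positivity) (IsUltrametricDist.norm_natCast_le_one _ j)
    rw [IsUltrametricDist.closedBall_eq_of_mem hc]
    exact closedBall_subset_closedBall
      (pow_le_pow_right₀ (mod_cast (Fact.out : p.Prime).one_le) n.le_succ)

lemma pairwiseDisjoint_closedBall_natCast_div (n : ℕ) :
    (Finset.range p : Set ℕ).PairwiseDisjoint
      fun j => closedBall ((j : ℚ_[p]) / p ^ (n + 1)) ((p : ℝ) ^ n) := by
  intro j hj k hk hjk
  refine Set.disjoint_left.2 fun x hxj hxk => ?_
  have hp : (0 : ℝ) < p := mod_cast (Fact.out : p.Prime).pos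
  have hle : ‖(j - k : ℚ_[p]) / p ^ (n + 1)‖ ≤ (p : ℝ) ^ n := by
    rw [sub_div, ← dist_eq_norm]
    exact (IsUltrametricDist.dist_triangle_max _ x _).trans (max_le (dist_comm x _ ▸ hxj) hxk)
  have hlt := mul_lt_mul_of_pos_right
    (inv_lt_norm_natCast_sub_natCast (Finset.mem_range.1 hj) (Finset.mem_range.1 hk) hjk)
    (pow_pos hp (n + 1))
  rw [pow_succ', inv_mul_cancel_left₀ hp.ne'] at hlt
  rw [norm_div_p_pow, pow_succ'] at hle
  exact hle.not_gt hlt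

lemma sphere_eq_closedBall_sdiff (n : ℕ) :
    sphere (0 : ℚ_[p]) ((p : ℝ) ^ (n + 1)) =
      closedBall 0 ((p : ℝ) ^ (n + 1)) \ closedBall 0 ((p : ℝ) ^ n) := by
  ext x
  have h := norm_le_pow_iff_norm_lt_pow_add_one x n
  simp only [zpow_natCast, ← Nat.cast_succ] at h
  simp only [mem_sphere_zero_iff_norm, mem_sdiff, mem_closedBall_zero_iff, h, not_lt]
  exact ⟨fun hx => ⟨hx.le, hx.ge⟩, fun hx => hx.1.antisymm hx.2⟩

section Haar

variable [MeasurableSpace ℚ_[p]] [BorelSpace ℚ_[p]] (μ : Measure ℚ_[p]) [μ.IsAddHaarMeasure]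

lemma addHaar_closedBall_pow (hμ : μ (closedBall 0 1) = 1) (n : ℕ) :
    μ (closedBall (0 : ℚ_[p]) ((p : ℝ) ^ n)) = (p : ℝ≥0∞) ^ n := by
  induction n with
  | zero => simpa using hμ
  | succ n ih =>
    rw [closedBall_zero_pow_succ_eq_biUnion, measure_biUnion_finset
      (pairwiseDisjoint_closedBall_natCast_div n) fun _ _ => measurableSet_closedBall]
    simp [Measure.addHaar_closedBall_center, ih, pow_succ']

lemma addHaar_sphere_pow_succ (hμ : μ (closedBall 0 1) = 1) (n : ℕ) :
    μ (sphere (0 : ℚ_[p]) ((p : ℝ) ^ (n + 1))) =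
      (p : ℝ≥0∞) ^ (n + 1) * (1 - (p : ℝ≥0∞)⁻¹) := by
  rw [sphere_eq_closedBall_sdiff, measure_sdiff (closedBall_subset_closedBall ?_)
      measurableSet_closedBall.nullMeasurableSet (by simp [addHaar_closedBall_pow μ hμ]),
    addHaar_closedBall_pow μ hμ, addHaar_closedBall_pow μ hμ, ENNReal.mul_sub (by simp), mul_one,
    pow_succ, mul_assoc, ENNReal.mul_inv_cancel (by simp [(Fact.out : p.Prime).ne_zero]) (by simp),
    mul_one]
  exact pow_le_pow_right₀ (mod_cast (Fact.out : p.Prime).one_le) n.le_succ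

lemma lintegral_inv_max_one_norm_sq (hμ : μ (closedBall 0 1) = 1) :
    ∫⁻ b, ENNReal.ofReal (1 / max 1 ‖b‖ ^ 2) ∂μ = 1 + (p : ℝ≥0∞)⁻¹ := by
  have hp : (1 : ℝ) ≤ p := mod_cast (Fact.out : p.Prime).one_le
  set q : ℝ≥0∞ := (p : ℝ≥0∞)⁻¹
  have hq : q < 1 := ENNReal.inv_lt_one.2 (mod_cast (Fact.out : p.Prime).one_lt)
  have hball : ∀ b ∈ closedBall (0 : ℚ_[p]) 1, ENNReal.ofReal (1 / max 1 ‖b‖ ^ 2) = 1 := by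
    intro b hb
    simp [max_eq_left (mem_closedBall_zero_iff.1 hb)]
  have hsphere : ∀ n, ∀ b ∈ sphere (0 : ℚ_[p]) ((p : ℝ) ^ (n + 1)),
      ENNReal.ofReal (1 / max 1 ‖b‖ ^ 2) = q ^ (n + 1) * q ^ (n + 1) := by
    intro n b hb
    rw [mem_sphere_zero_iff_norm.1 hb, max_eq_right (one_le_pow₀ hp), one_div,
      ENNReal.ofReal_inv_of_pos (by positivity), ← pow_mul, ENNReal.ofReal_pow (by positivity),
      ofReal_natCast, ← pow_add, ← two_mul, mul_comm, ENNReal.inv_pow]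
  have hcover : ⋃ n, closedBall (0 : ℚ_[p]) ((p : ℝ) ^ n) = univ := by
    refine eq_univ_of_forall fun x => mem_iUnion.2 ?_
    obtain ⟨N, hN⟩ := exists_nat_gt ‖x‖
    refine ⟨N, mem_closedBall_zero_iff.2 (hN.le.trans ?_)⟩
    exact_mod_cast (Nat.lt_pow_self (Fact.out : p.Prime).one_lt).le
  have hterm (n : ℕ) :
      ∫⁻ x in sphere 0 ((p : ℝ) ^ (n + 1)), ENNReal.ofReal (1 / max 1 ‖x‖ ^ 2) ∂μ =
        q ^ (n + 1) * (1 - q) := by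
    rw [setLIntegral_congr_fun isClosed_sphere.measurableSet (hsphere n), setLIntegral_const,
      addHaar_sphere_pow_succ μ hμ, ← mul_assoc, mul_assoc (q ^ (n + 1)), ← mul_pow,
      ENNReal.inv_mul_cancel (by simp [(Fact.out : p.Prime).ne_zero]) (by simp), one_pow, mul_one]
  rw [lintegral_eq_setLIntegral_add_tsum_sdiff (B := fun n => closedBall (0 : ℚ_[p]) ((p : ℝ) ^ n))
    (fun _ _ h => closedBall_subset_closedBall (pow_right_mono₀ hp h))
    (fun _ => measurableSet_closedBall) hcover]
  simp_rw [← sphere_eq_closedBall_sdiff, pow_zero, hterm]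
  rw [setLIntegral_congr_fun measurableSet_closedBall hball, setLIntegral_const, hμ, one_mul,
    ENNReal.tsum_mul_right, ENNReal.tsum_geometric_add_one, mul_assoc,
    ENNReal.inv_mul_cancel (tsub_pos_of_lt hq).ne' (by simp), mul_one]

end Haar

end Padic

/-- For every prime `p`, the `p`-adic integral of `1/max(1,|b|_p)²` over `b ∈ ℚ_p`,
with respect to the Haar measure giving `ℤ_p` measure `1`, equals `1 + 1/p`. -/
theorem stmt_1 (p : ℕ) [Fact p.Prime] [MeasurableSpace ℚ_[p]] [BorelSpace ℚ_[p]]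
    (μ : Measure ℚ_[p]) [μ.IsAddHaarMeasure]
    (hμ : μ {x : ℚ_[p] | ‖x‖ ≤ 1} = 1) :
    ∫ b : ℚ_[p], 1 / (max 1 ‖b‖) ^ 2 ∂μ = 1 + 1 / (p : ℝ) := by
  have hball : μ (closedBall 0 1) = 1 := by
    rwa [show closedBall (0 : ℚ_[p]) 1 = {x | ‖x‖ ≤ 1} from
      Set.ext fun _ => mem_closedBall_zero_iff]
  have hmeas : Measurable fun b : ℚ_[p] => 1 / max 1 ‖b‖ ^ 2 := by fun_prop
  have hinv : (p : ℝ≥0∞)⁻¹ ≠ ∞ := by simp [(Fact.out : p.Prime).ne_zero]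
  rw [integral_eq_lintegral_of_nonneg_ae (ae_of_all _ fun _ => by positivity)
      hmeas.aestronglyMeasurable,
    Padic.lintegral_inv_max_one_norm_sq μ hball, ENNReal.toReal_add one_ne_top hinv,
    ENNReal.toReal_one, ENNReal.toReal_inv, ENNReal.toReal_natCast, one_div]
end

section
/- The volume V(B) of the region {(a₁,b₀,b₁,c₀,c₁) ∈ ℝ⁵ : |a₁|,|b₀|,|b₁|,|c₀|,|c₁| ≥ 1 and |a₁|·max(b₀²,b₁²)·max(c₀²,c₁²) ≤ B}, divided by 4, satisfies V(B) = 4·B·(log B)² + O(B·log B) as B → ∞. -/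
open MeasureTheory Filter Asymptotics Set
open scoped ENNReal

/-!
Integrating out `a₁` first, the slice over `(b₀, b₁, c₀, c₁)` has measure `2 (B / (m² n²) - 1)`
with `m = max(|b₀|, |b₁|)` and `n = max(|c₀|, |c₁|)`. On `{|x|, |y| ≥ 1}` the maximum of `|x|` and
`|y|` has density `8 (t - 1)` on `(1, ∞)`, so with `s = √B` the volume is the elementary integral
`64 ∫₁ˢ (m - 1) ∫₁^{s/m} (n - 1) · 2 ((s/m)² / n² - 1) dn dm`
`  = 64 (s² log² s - 5 s² log s - 4 s log s + 17/2 s² - 8 s - 1/2)`.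
As `log s = (log B) / 2`, a quarter of this is `4 B log² B + O(B log B)`.
-/

theorem lintegral_comp_abs (f : ℝ → ℝ≥0∞) : ∫⁻ x, f |x| = 2 * ∫⁻ x in Ioi 0, f x := by
  have h_pos : ∫⁻ x in Ioi 0, f |x| = ∫⁻ x in Ioi 0, f x :=
    setLIntegral_congr_fun measurableSet_Ioi fun x hx => by rw [abs_of_pos hx]
  have h_neg : ∫⁻ x in Iic 0, f |x| = ∫⁻ x in Ioi 0, f |x| := by
    rw [← lintegral_indicator measurableSet_Iic, ← lintegral_neg_eq_self,
      setLIntegral_congr Ioi_ae_eq_Ici, ← lintegral_indicator measurableSet_Ici]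
    congr 1 with x
    simp [indicator_apply]
  rw [← lintegral_add_compl _ measurableSet_Iic, compl_Iic, h_neg, h_pos, two_mul]

theorem lintegral_ite_le_abs {a : ℝ} (ha : 0 < a) (h : ℝ → ℝ≥0∞) :
    ∫⁻ x, (if a ≤ |x| then h |x| else 0) = 2 * ∫⁻ x in Ioi a, h x := by
  rw [lintegral_comp_abs fun t => if a ≤ t then h t else 0,
    setLIntegral_congr (Ioi_ae_eq_Ici (a := a)), ← lintegral_indicator measurableSet_Ici,
    ← lintegral_indicator measurableSet_Ioi]
  congr 2 with x
  by_cases hx : a ≤ x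
  · simp [hx, ha.trans_le hx]
  · simp [indicator_apply, hx]

theorem setLIntegral_Ioi_max {a u : ℝ} (hau : a ≤ u) (g : ℝ → ℝ≥0∞) :
    ∫⁻ y in Ioi a, g (max u y) = ENNReal.ofReal (u - a) * g u + ∫⁻ y in Ioi u, g y := by
  rw [← Ioc_union_Ioi_eq_Ioi hau, lintegral_union measurableSet_Ioi Ioc_disjoint_Ioi_same,
    setLIntegral_congr_fun measurableSet_Ioc fun y hy => by rw [max_eq_left hy.2],
    setLIntegral_congr_fun measurableSet_Ioi fun y hy => by rw [max_eq_right (le_of_lt hy)],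
    setLIntegral_const, Real.volume_Ioc, mul_comm]

theorem setLIntegral_Ioi_setLIntegral_Ioi {g : ℝ → ℝ≥0∞} (hg : Measurable g) (a : ℝ) :
    ∫⁻ x in Ioi a, ∫⁻ y in Ioi x, g y = ∫⁻ y in Ioi a, ENNReal.ofReal (y - a) * g y := by
  have h_swap : Measurable (Function.uncurry fun x y : ℝ => (Ioi x).indicator g y) :=
    (hg.comp measurable_snd).indicator (measurableSet_lt measurable_fst measurable_snd)
  have h_ind : ∀ x, ∫⁻ y in Ioi x, g y = ∫⁻ y, (Ioi x).indicator g y := fun x =>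
    (lintegral_indicator measurableSet_Ioi g).symm
  rw [lintegral_congr h_ind, lintegral_lintegral_swap h_swap.aemeasurable,
    setLIntegral_eq_of_support_subset]
  · congr 1 with y
    have : ∀ x, (Ioi x).indicator g y = (Iio y).indicator (fun _ => g y) x := fun x => by
      simp [indicator_apply]
    simp_rw [this]
    rw [lintegral_indicator measurableSet_Iio, setLIntegral_const,
      Measure.restrict_apply measurableSet_Iio, Iio_inter_Ioi, Real.volume_Ioo, mul_comm]
  · intro y hy
    by_contra h
    exact hy (by simp [ENNReal.ofReal_eq_zero.2 (sub_nonpos.2 (not_lt.1 h))])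

theorem setLIntegral_Ioi_setLIntegral_Ioi_max {g : ℝ → ℝ≥0∞} (hg : Measurable g) (a : ℝ) :
    ∫⁻ x in Ioi a, ∫⁻ y in Ioi a, g (max x y)
      = 2 * ∫⁻ t in Ioi a, ENNReal.ofReal (t - a) * g t := by
  rw [setLIntegral_congr_fun measurableSet_Ioi fun x hx => setLIntegral_Ioi_max (le_of_lt hx) g,
    lintegral_add_left (by fun_prop), setLIntegral_Ioi_setLIntegral_Ioi hg, two_mul]

theorem lintegral_lintegral_ite_le_abs_max {a : ℝ} (ha : 0 < a) {g : ℝ → ℝ≥0∞}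
    (hg : Measurable g) :
    ∫⁻ x, ∫⁻ y, (if a ≤ |x| ∧ a ≤ |y| then g (max |x| |y|) else 0)
      = 8 * ∫⁻ t in Ioi a, ENNReal.ofReal (t - a) * g t := by
  have h_inner : ∀ x : ℝ, ∫⁻ y, (if a ≤ |x| ∧ a ≤ |y| then g (max |x| |y|) else 0)
      = if a ≤ |x| then 2 * ∫⁻ y in Ioi a, g (max |x| y) else 0 := fun x => by
    by_cases hx : a ≤ |x|
    · simpa only [hx, true_and, if_true] using lintegral_ite_le_abs ha fun y => g (max |x| y)
    · simp [hx]
  rw [lintegral_congr h_inner, lintegral_ite_le_abs ha fun u => 2 * ∫⁻ y in Ioi a, g (max u y),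
    lintegral_const_mul' _ _ (by norm_num), setLIntegral_Ioi_setLIntegral_Ioi_max hg, ← mul_assoc,
    ← mul_assoc]
  norm_num

theorem setLIntegral_Ioi_ofReal_eq_intervalIntegral {f : ℝ → ℝ} {a b : ℝ} (hab : a ≤ b)
    (hf : IntervalIntegrable f volume a b) (h_nonneg : ∀ x ∈ Ioc a b, 0 ≤ f x)
    (h_nonpos : ∀ x ∈ Ioi b, f x ≤ 0) :
    ∫⁻ x in Ioi a, ENNReal.ofReal (f x) = ENNReal.ofReal (∫ x in a..b, f x) := by
  rw [← Ioc_union_Ioi_eq_Ioi hab, lintegral_union measurableSet_Ioi Ioc_disjoint_Ioi_same,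
    setLIntegral_congr_fun measurableSet_Ioi fun x hx => ENNReal.ofReal_eq_zero.2 (h_nonpos x hx),
    lintegral_zero, add_zero, intervalIntegral.integral_of_le hab,
    ofReal_integral_eq_lintegral_ofReal ((intervalIntegrable_iff_integrableOn_Ioc_of_le hab).1 hf)
      ((ae_restrict_iff' measurableSet_Ioc).2 (ae_of_all _ h_nonneg))]

theorem volume_setOf_one_le_abs_mul_le {P : ℝ} (hP : 0 < P) (B : ℝ) :
    volume {a : ℝ | 1 ≤ |a| ∧ |a| * P ≤ B} = ENNReal.ofReal (2 * (B / P - 1)) := by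
  have h_ind : ∀ a, {a : ℝ | 1 ≤ |a| ∧ |a| * P ≤ B}.indicator (1 : ℝ → ℝ≥0∞) a
      = if 1 ≤ |a| then (Iic (B / P)).indicator 1 |a| else 0 := fun a => by
    by_cases ha : 1 ≤ |a| <;> simp [indicator_apply, ha, le_div_iff₀ hP]
  rw [← lintegral_indicator_one (by measurability), lintegral_congr h_ind,
    lintegral_ite_le_abs one_pos, lintegral_indicator_one measurableSet_Iic,
    Measure.restrict_apply measurableSet_Iic,
    Iic_inter_Ioi, Real.volume_Ioc, ENNReal.ofReal_mul zero_le_two, ENNReal.ofReal_ofNat]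

theorem max_sq_eq_sq_max_abs (x y : ℝ) : max (x ^ 2) (y ^ 2) = max |x| |y| ^ 2 := by
  rw [← sq_abs x, ← sq_abs y]
  exact (pow_left_monotoneOn.map_max (abs_nonneg x) (abs_nonneg y)).symm

def region (B : ℝ) : Set (ℝ × ℝ × ℝ × ℝ × ℝ) :=
  {x : ℝ × ℝ × ℝ × ℝ × ℝ |
      1 ≤ |x.1| ∧ 1 ≤ |x.2.1| ∧ 1 ≤ |x.2.2.1| ∧ 1 ≤ |x.2.2.2.1| ∧ 1 ≤ |x.2.2.2.2| ∧
      |x.1| * max (x.2.1 ^ 2) (x.2.2.1 ^ 2) * max (x.2.2.2.1 ^ 2) (x.2.2.2.2 ^ 2) ≤ B}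

theorem volume_region_eq_lintegral (B : ℝ) :
    volume (region B) = ∫⁻ b₀, ∫⁻ b₁, ∫⁻ c₀, ∫⁻ c₁,
          if (1 ≤ |b₀| ∧ 1 ≤ |b₁|) ∧ (1 ≤ |c₀| ∧ 1 ≤ |c₁|) then
            ENNReal.ofReal (2 * (B / (max |b₀| |b₁| ^ 2 * max |c₀| |c₁| ^ 2) - 1))
          else 0 := by
  set F : ℝ × ℝ × ℝ × ℝ → ℝ≥0∞ := fun y =>
    if (1 ≤ |y.1| ∧ 1 ≤ |y.2.1|) ∧ (1 ≤ |y.2.2.1| ∧ 1 ≤ |y.2.2.2|) then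
      ENNReal.ofReal (2 * (B / (max |y.1| |y.2.1| ^ 2 * max |y.2.2.1| |y.2.2.2| ^ 2) - 1))
    else 0 with hF
  have hF_meas : Measurable F := Measurable.ite (by measurability) (by fun_prop) measurable_const
  have h_slice : ∀ y, volume ((fun a => (a, y)) ⁻¹' region B) = F y := fun y => by
    by_cases hy : (1 ≤ |y.1| ∧ 1 ≤ |y.2.1|) ∧ (1 ≤ |y.2.2.1| ∧ 1 ≤ |y.2.2.2|)
    · have hP : 0 < max |y.1| |y.2.1| ^ 2 * max |y.2.2.1| |y.2.2.2| ^ 2 := by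
        have := hy.1.1.trans (le_max_left |y.1| |y.2.1|)
        have := hy.2.1.trans (le_max_left |y.2.2.1| |y.2.2.2|)
        positivity
      simp only [hF, if_pos hy]
      rw [← volume_setOf_one_le_abs_mul_le hP]
      congr 1 with a
      simp only [region, mem_preimage, mem_ofPred_eq, max_sq_eq_sq_max_abs, mul_assoc]
      tauto
    · simp only [hF, if_neg hy]
      rw [← measure_empty (μ := (volume : Measure ℝ))]
      congr 1 with a
      simp only [region, mem_preimage, mem_ofPred_eq, mem_empty_iff_false, iff_false]
      tauto
  rw [Measure.volume_eq_prod, Measure.prod_apply_symm (by unfold region; measurability),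
    lintegral_congr h_slice, Measure.volume_eq_prod, lintegral_prod _ hF_meas.aemeasurable]
  congr 1 with b₀
  rw [Measure.volume_eq_prod,
    lintegral_prod (fun z => F (b₀, z)) (hF_meas.comp measurable_prodMk_left).aemeasurable]
  congr 1 with b₁
  rw [Measure.volume_eq_prod, lintegral_prod (fun z => F (b₀, b₁, z))
    ((hF_meas.comp measurable_prodMk_left).comp measurable_prodMk_left).aemeasurable]

noncomputable def innerIntegral (K : ℝ) : ℝ := 2 * K ^ 2 * Real.log K - 3 * K ^ 2 + 4 * K - 1

theorem intervalIntegrable_innerIntegrand {K : ℝ} (hK : 0 < K) :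
    IntervalIntegrable (fun n => (n - 1) * (2 * (K ^ 2 / n ^ 2 - 1))) volume 1 K := by
  refine ContinuousOn.intervalIntegrable fun n hn => ?_
  have : n ≠ 0 := (lt_min one_pos hK |>.trans_le hn.1).ne'
  fun_prop (disch := simp [*])

theorem integral_innerIntegrand_eq {K : ℝ} (hK : 0 < K) :
    ∫ n in (1 : ℝ)..K, (n - 1) * (2 * (K ^ 2 / n ^ 2 - 1)) = innerIntegral K := by
  have h_deriv : ∀ n ∈ uIcc 1 K, HasDerivAt
      (fun n => 2 * K ^ 2 * Real.log n + 2 * K ^ 2 * n⁻¹ - n ^ 2 + 2 * n)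
      ((n - 1) * (2 * (K ^ 2 / n ^ 2 - 1))) n := fun n hn => by
    have hn : n ≠ 0 := (lt_min one_pos hK |>.trans_le hn.1).ne'
    refine ((((Real.hasDerivAt_log hn).const_mul (2 * K ^ 2)).add
      ((hasDerivAt_inv hn).const_mul (2 * K ^ 2))).sub (hasDerivAt_pow 2 n)).add
      ((hasDerivAt_id' n).const_mul 2) |>.congr_deriv ?_
    field_simp
    ring
  rw [intervalIntegral.integral_eq_sub_of_hasDerivAt h_deriv (intervalIntegrable_innerIntegrand hK),
    innerIntegral]
  simp only [Real.log_one]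
  field_simp
  ring

theorem innerIntegral_nonneg {K : ℝ} (hK : 1 ≤ K) : 0 ≤ innerIntegral K := by
  rw [← integral_innerIntegrand_eq (by linarith)]
  refine intervalIntegral.integral_nonneg hK fun n hn => ?_
  have : 1 ≤ K ^ 2 / n ^ 2 := by
    rw [one_le_div (by nlinarith [hn.1])]; nlinarith [hn.1, hn.2]
  nlinarith [hn.1]

theorem innerIntegral_nonpos {K : ℝ} (hK0 : 0 < K) (hK : K ≤ 1) : innerIntegral K ≤ 0 := by
  rw [← integral_innerIntegrand_eq hK0, intervalIntegral.integral_symm, neg_nonpos]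
  refine intervalIntegral.integral_nonneg hK fun n hn => ?_
  have : K ^ 2 / n ^ 2 ≤ 1 := by
    rw [div_le_one (by nlinarith [hn.1])]; nlinarith [hn.1, hn.2]
  nlinarith [hn.2]

theorem setLIntegral_Ioi_innerIntegrand {K : ℝ} (hK : 0 < K) :
    ∫⁻ n in Ioi 1, ENNReal.ofReal ((n - 1) * (2 * (K ^ 2 / n ^ 2 - 1)))
      = ENNReal.ofReal (innerIntegral K) := by
  have h_nonpos : ∀ n, 1 ≤ n → K ≤ n → (n - 1) * (2 * (K ^ 2 / n ^ 2 - 1)) ≤ 0 :=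
      fun n h1 hKn => by
    have : K ^ 2 / n ^ 2 ≤ 1 := by
      rw [div_le_one (by positivity)]; nlinarith
    nlinarith
  rcases le_total 1 K with h1K | hK1
  · rw [setLIntegral_Ioi_ofReal_eq_intervalIntegral h1K (intervalIntegrable_innerIntegrand hK)
      (fun n hn => ?_) (fun n hn => h_nonpos n (h1K.trans hn.le) hn.le),
      integral_innerIntegrand_eq hK]
    have : 1 ≤ K ^ 2 / n ^ 2 := by
      rw [one_le_div (by nlinarith [hn.1])]; nlinarith [hn.1, hn.2]
    nlinarith [hn.1]
  · rw [setLIntegral_Ioi_ofReal_eq_intervalIntegral le_rfl IntervalIntegrable.refl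
      (fun n hn => absurd hn.2 (not_le.2 hn.1)) (fun n hn => h_nonpos n hn.le (hK1.trans hn.le)),
      intervalIntegral.integral_same, ENNReal.ofReal_zero,
      ENNReal.ofReal_of_nonpos (innerIntegral_nonpos hK hK1)]

noncomputable def outerIntegral (s : ℝ) : ℝ :=
  s ^ 2 * Real.log s ^ 2 - 5 * s ^ 2 * Real.log s - 4 * s * Real.log s + 17 / 2 * s ^ 2 - 8 * s
    - 1 / 2

theorem intervalIntegrable_outerIntegrand {s : ℝ} (hs : 1 ≤ s) :
    IntervalIntegrable (fun m => (m - 1) * innerIntegral (s / m)) volume 1 s := by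
  refine ContinuousOn.intervalIntegrable fun m hm => ?_
  rw [uIcc_of_le hs] at hm
  have : m ≠ 0 := by linarith [hm.1]
  have : s / m ≠ 0 := div_ne_zero (by positivity) this
  simp only [innerIntegral]
  fun_prop (disch := simp [*])

theorem integral_outerIntegrand_eq {s : ℝ} (hs : 1 ≤ s) :
    ∫ m in (1 : ℝ)..s, (m - 1) * innerIntegral (s / m) = outerIntegral s := by
  set L := Real.log s
  have h_deriv : ∀ m ∈ uIcc 1 s, HasDerivAt
      (fun m => (2 * s ^ 2 * L - 3 * s ^ 2 - 4 * s) * Real.log m - s ^ 2 * Real.log m ^ 2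
        - s ^ 2 * ((2 * Real.log m - (2 * L - 5)) / m) + (4 * s + 1) * m - m ^ 2 / 2)
      ((m - 1) * innerIntegral (s / m)) m := fun m hm => by
    rw [uIcc_of_le hs] at hm
    have hm0 : 0 < m := by linarith [hm.1]
    have hlog := Real.hasDerivAt_log hm0.ne'
    refine (((((hlog.const_mul (2 * s ^ 2 * L - 3 * s ^ 2 - 4 * s)).sub
      ((hlog.pow 2).const_mul (s ^ 2))).sub
      ((((hlog.const_mul 2).sub_const (2 * L - 5)).div (hasDerivAt_id' m) hm0.ne').const_mul
        (s ^ 2))).add ((hasDerivAt_id' m).const_mul (4 * s + 1))).sub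
      ((hasDerivAt_pow 2 m).div_const 2)) |>.congr_deriv ?_
    rw [innerIntegral, Real.log_div (by positivity) hm0.ne']
    field_simp
    ring
  rw [intervalIntegral.integral_eq_sub_of_hasDerivAt h_deriv
    (intervalIntegrable_outerIntegrand hs), outerIntegral]
  have : s ≠ 0 := by positivity
  simp only [Real.log_one]
  field_simp
  ring

theorem sub_one_mul_innerIntegral_div_nonneg {s m : ℝ} (hm : 1 ≤ m) (hms : m ≤ s) :
    0 ≤ (m - 1) * innerIntegral (s / m) :=
  mul_nonneg (by linarith) (innerIntegral_nonneg ((one_le_div (by linarith)).2 hms))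

theorem outerIntegral_nonneg {s : ℝ} (hs : 1 ≤ s) : 0 ≤ outerIntegral s :=
  integral_outerIntegrand_eq hs ▸ intervalIntegral.integral_nonneg hs fun _ hm =>
    sub_one_mul_innerIntegral_div_nonneg hm.1 hm.2

theorem setLIntegral_Ioi_outerIntegrand {s : ℝ} (hs : 1 ≤ s) :
    ∫⁻ m in Ioi 1, ENNReal.ofReal ((m - 1) * innerIntegral (s / m))
      = ENNReal.ofReal (outerIntegral s) := by
  rw [setLIntegral_Ioi_ofReal_eq_intervalIntegral hs (intervalIntegrable_outerIntegrand hs)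
    (fun m hm => sub_one_mul_innerIntegral_div_nonneg hm.1.le hm.2), integral_outerIntegrand_eq hs]
  intro m hm
  have hm0 : 0 < m := by linarith [mem_Ioi.1 hm]
  exact mul_nonpos_of_nonneg_of_nonpos (by linarith [mem_Ioi.1 hm])
    (innerIntegral_nonpos (by positivity) ((div_le_one hm0).2 (le_of_lt hm)))

theorem volume_region_toReal {B : ℝ} (hB : 1 ≤ B) :
    (volume (region B)).toReal = 16 * B * Real.log B ^ 2 - 160 * B * Real.log B
      - 128 * √B * Real.log B + 544 * B - 512 * √B - 32 := by
  set s := √B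
  have hs : 1 ≤ s := Real.one_le_sqrt.2 hB
  have hBs : B = s ^ 2 := (Real.sq_sqrt (by linarith)).symm
  set g : ℝ → ℝ≥0∞ := fun m =>
    8 * ∫⁻ n in Ioi 1, ENNReal.ofReal (n - 1) * ENNReal.ofReal (2 * (B / (m ^ 2 * n ^ 2) - 1))
  have hg : Measurable g := by
    refine Measurable.const_mul ?_ 8
    exact Measurable.lintegral_prod_right (f := fun m n : ℝ =>
      ENNReal.ofReal (n - 1) * ENNReal.ofReal (2 * (B / (m ^ 2 * n ^ 2) - 1))) (by fun_prop)
  have h_inner : ∀ b₀ b₁ : ℝ, ∫⁻ c₀, ∫⁻ c₁,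
      (if (1 ≤ |b₀| ∧ 1 ≤ |b₁|) ∧ (1 ≤ |c₀| ∧ 1 ≤ |c₁|) then
        ENNReal.ofReal (2 * (B / (max |b₀| |b₁| ^ 2 * max |c₀| |c₁| ^ 2) - 1)) else 0)
      = if 1 ≤ |b₀| ∧ 1 ≤ |b₁| then g (max |b₀| |b₁|) else 0 := fun b₀ b₁ => by
    by_cases hb : 1 ≤ |b₀| ∧ 1 ≤ |b₁|
    · simp only [hb, true_and, if_true]
      exact lintegral_lintegral_ite_le_abs_max one_pos
        (g := fun n => ENNReal.ofReal (2 * (B / (max |b₀| |b₁| ^ 2 * n ^ 2) - 1))) (by fun_prop)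
    · simp [hb]
  have h_slice : ∀ m ∈ Ioi (1 : ℝ), ENNReal.ofReal (m - 1) * g m
      = 8 * ENNReal.ofReal ((m - 1) * innerIntegral (s / m)) := fun m hm => by
    have hm0 : 0 < m := one_pos.trans hm
    have h_int : ∀ n ∈ Ioi (1 : ℝ),
        ENNReal.ofReal (n - 1) * ENNReal.ofReal (2 * (B / (m ^ 2 * n ^ 2) - 1))
          = ENNReal.ofReal ((n - 1) * (2 * ((s / m) ^ 2 / n ^ 2 - 1))) := fun n hn => by
      rw [← ENNReal.ofReal_mul (by linarith [mem_Ioi.1 hn]), hBs, div_pow, div_div]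
    simp only [g]
    rw [setLIntegral_congr_fun measurableSet_Ioi h_int,
      setLIntegral_Ioi_innerIntegrand (by positivity),
      ENNReal.ofReal_mul (by linarith [mem_Ioi.1 hm]), mul_left_comm]
  rw [volume_region_eq_lintegral]
  simp_rw [h_inner]
  rw [lintegral_lintegral_ite_le_abs_max one_pos hg,
    setLIntegral_congr_fun measurableSet_Ioi h_slice, lintegral_const_mul' _ _ (by norm_num),
    setLIntegral_Ioi_outerIntegrand hs, ← mul_assoc, ENNReal.toReal_mul, ENNReal.toReal_mul,
    ENNReal.toReal_ofNat, ENNReal.toReal_ofReal (outerIntegral_nonneg hs), outerIntegral,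
    Real.log_sqrt (by linarith), ← hBs]
  ring

theorem isBigO_remainder :
    (fun B : ℝ => -40 * (B * Real.log B) - 32 * (√B * Real.log B) + 136 * B - 128 * √B - 8)
      =O[atTop] fun B => B * Real.log B := by
  refine isBigO_iff.2 ⟨344, ?_⟩
  filter_upwards [eventually_ge_atTop (Real.exp 1)] with B hB
  have hB1 : 1 ≤ B := (Real.one_le_exp zero_le_one).trans hB
  have hL : 1 ≤ Real.log B := (Real.le_log_iff_exp_le (by linarith)).2 hB
  have hsqrt : √B ≤ B := Real.sqrt_le_self_iff.2 (Or.inr hB1)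
  have hsqrt1 : 1 ≤ √B := Real.one_le_sqrt.2 hB1
  have hBL : B ≤ B * Real.log B := le_mul_of_one_le_right (by linarith) hL
  have hsqrtL : √B * Real.log B ≤ B * Real.log B :=
    mul_le_mul_of_nonneg_right hsqrt (by linarith)
  simp only [Real.norm_eq_abs]
  rw [abs_of_nonneg (a := B * Real.log B) (by linarith), abs_le]
  constructor <;> nlinarith

/-- Let `V(B)` be one quarter of the Lebesgue volume of the region
`{(a₁,b₀,b₁,c₀,c₁) ∈ ℝ⁵ : |a₁|,|b₀|,|b₁|,|c₀|,|c₁| ≥ 1,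
|a₁|·max(b₀²,b₁²)·max(c₀²,c₁²) ≤ B}`.
Then `V(B) = 4·B·(log B)² + O(B·log B)` as `B → ∞`. -/
theorem stmt_6 :
    (fun B : ℝ =>
        (volume {x : ℝ × ℝ × ℝ × ℝ × ℝ |
            1 ≤ |x.1| ∧ 1 ≤ |x.2.1| ∧ 1 ≤ |x.2.2.1| ∧ 1 ≤ |x.2.2.2.1| ∧ 1 ≤ |x.2.2.2.2| ∧
            |x.1| * max (x.2.1 ^ 2) (x.2.2.1 ^ 2) * max (x.2.2.2.1 ^ 2) (x.2.2.2.2 ^ 2)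
              ≤ B}).toReal / 4
          - 4 * B * (Real.log B) ^ 2)
      =O[atTop] fun B : ℝ => B * Real.log B := by
  have h_eq : (fun B : ℝ =>
      -40 * (B * Real.log B) - 32 * (√B * Real.log B) + 136 * B - 128 * √B - 8)
        =ᶠ[atTop] fun B => (volume (region B)).toReal / 4 - 4 * B * Real.log B ^ 2 := by
    filter_upwards [eventually_ge_atTop 1] with B hB
    rw [volume_region_toReal hB]
    ring
  exact isBigO_remainder.congr' h_eq EventuallyEq.rfl
end
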